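/- Let S be a finite positive spanning set of unit vectors in ℝⁿ, B ⊆ S a basis, and u the unit vector with u⊤ d = α > 0 for all d ∈ B. If additionally u⊤ d ≤ α for all d ∈ S, then u/α is a vertex of P = {x : x⊤ d ≤ 1, d ∈ S}, and it is the unique point of ℝⁿ satisfying (u/α)⊤ d = 1 for all d ∈ B. -/

import Mathlib

open scoped RealInnerProductSpace

/-- `x` is a vertex of the polyhedron `{x : ⟪x, d⟫ ≤ 1 for all d ∈ S}`:
it is feasible and has `n` linearly independent active constraints. -/
def IsVertexOf {n : ℕ} (S : Finset (EuclideanSpace ℝ (Fin n)))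
    (x : EuclideanSpace ℝ (Fin n)) : Prop :=
  (∀ d ∈ S, ⟪x, d⟫ ≤ 1) ∧
  ∃ B : Finset (EuclideanSpace ℝ (Fin n)), B ⊆ S ∧
    LinearIndependent ℝ (fun d : ↥(B : Set (EuclideanSpace ℝ (Fin n))) => (d : EuclideanSpace ℝ (Fin n))) ∧
    Submodule.span ℝ (B : Set (EuclideanSpace ℝ (Fin n))) = ⊤ ∧
    ∀ d ∈ B, ⟪x, d⟫ = 1

theorem gram_vector_gives_vertex (n : ℕ)
    (S : Finset (EuclideanSpace ℝ (Fin n)))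
    (hunit : ∀ d ∈ S, ‖d‖ = 1)
    (hspan : ∀ x : EuclideanSpace ℝ (Fin n),
      ∃ c : EuclideanSpace ℝ (Fin n) → ℝ, (∀ d, 0 ≤ c d) ∧ x = ∑ d ∈ S, c d • d)
    (B : Finset (EuclideanSpace ℝ (Fin n))) (hBS : B ⊆ S)
    (hli : LinearIndependent ℝ (fun d : ↥(B : Set (EuclideanSpace ℝ (Fin n))) => (d : EuclideanSpace ℝ (Fin n))))
    (hsp : Submodule.span ℝ (B : Set (EuclideanSpace ℝ (Fin n))) = ⊤)
    (u : EuclideanSpace ℝ (Fin n)) (hu : ‖u‖ = 1)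
    (α : ℝ) (hα : 0 < α)
    (hGram : ∀ d ∈ B, ⟪u, d⟫ = α)
    (hcone : ∀ d ∈ S, ⟪u, d⟫ ≤ α) :
    IsVertexOf S (α⁻¹ • u) ∧
    ∀ y : EuclideanSpace ℝ (Fin n), (∀ d ∈ B, ⟪y, d⟫ = 1) → y = α⁻¹ • u := by
  have hactive : ∀ d ∈ B, ⟪α⁻¹ • u, d⟫ = 1 := by
    intro d hd
    rw [inner_smul_left]
    simp [hGram d hd, inv_mul_cancel₀ hα.ne']
  constructor
  · refine ⟨?_, B, hBS, hli, hsp, hactive⟩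
    intro d hd
    rw [inner_smul_left]
    have := hcone d hd
    calc (α⁻¹ : ℝ) * ⟪u, d⟫ ≤ α⁻¹ * α := by
          exact mul_le_mul_of_nonneg_left this (by positivity)
      _ = 1 := inv_mul_cancel₀ hα.ne'
  · intro y hy
    set z := y - α⁻¹ • u with hz
    have hzero : ∀ d ∈ B, ⟪z, d⟫ = 0 := by
      intro d hd
      rw [hz, inner_sub_left, hy d hd, hactive d hd, sub_self]
    have hall : ∀ x ∈ Submodule.span ℝ (B : Set (EuclideanSpace ℝ (Fin n))), ⟪z, x⟫ = 0 := by
      intro x hx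
      induction hx using Submodule.span_induction with
      | mem d hd => exact hzero d hd
      | zero => simp
      | add a b _ _ ha hb => rw [inner_add_right, ha, hb, add_zero]
      | smul c a _ ha => rw [inner_smul_right, ha, mul_zero]
    have : ⟪z, z⟫ = 0 := hall z (by rw [hsp]; trivial)
    have hz0 : z = 0 := inner_self_eq_zero.mp this
    have : y = α⁻¹ • u := by
      have := sub_eq_zero.mp hz0
      exact this
    exact this
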